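/- (Lemma 1, reverse direction) With f as in the previous setting, if there exists an assignment a of the first n₁ variables such that φ(a, b) = false for every assignment b of the remaining n₂ − n₁ variables, then the fully free sub-hypercube is not a minimal trap space of f: the sub-hypercube fixing the first n₁ coordinates to a, leaving coordinates n₁+1..n₂ free, and fixing the last two coordinates to false, is a trap space strictly contained in it. -/

import Mathlib

/-!
On the sub-hypercube fixing the first `n₁` coordinates to `a` and the last two to `false`, the
first `n₁` components of `f` are the identity and the `(n₂+2)`-th is constantly `false`; the
`(n₂+1)`-th is `φ(x)`, which is `false` because the first `n₁` coordinates of `x` are `a`. So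
this sub-hypercube is a trap space, and it is proper because it fixes a coordinate.
-/

def vset {n : ℕ} (h : Fin n → Option Bool) : Set (Fin n → Bool) :=
  { x | ∀ i b, h i = some b → x i = b }

def IsTrap {n : ℕ} (f : (Fin n → Bool) → (Fin n → Bool)) (h : Fin n → Option Bool) : Prop :=
  ∀ x ∈ vset h, f x ∈ vset h

def IsMinTrap {n : ℕ} (f : (Fin n → Bool) → (Fin n → Bool)) (h : Fin n → Option Bool) : Prop :=
  IsTrap f h ∧ ∀ h' : Fin n → Option Bool, IsTrap f h' → ¬ (vset h' ⊂ vset h)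

theorem vset_ssubset_vset_none {n : ℕ} {h : Fin n → Option Bool} {i : Fin n} {b : Bool}
    (hi : h i = some b) : vset h ⊂ vset (fun _ => none) := by
  refine ⟨fun x _ j c hj => by simp at hj, fun hsub => ?_⟩
  have : (fun _ => !b) ∈ vset h := hsub fun j c hj => by simp at hj
  simpa using this i b hi

theorem not_isMinTrap_of_isTrap_of_ssubset {n : ℕ} {f : (Fin n → Bool) → (Fin n → Bool)}
    {h h' : Fin n → Option Bool} (htrap : IsTrap f h') (hss : vset h' ⊂ vset h) :
    ¬ IsMinTrap f h :=
  fun hmin => hmin.2 h' htrap hss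

theorem exists_eq_dite_of_forall_lt_eq {α : Type*} {n₁ n₂ : ℕ} (a : Fin n₁ → α)
    (x : Fin n₂ → α) (hx : ∀ (i : Fin n₂) (hi : (i : ℕ) < n₁), x i = a ⟨i, hi⟩) :
    ∃ b : Fin (n₂ - n₁) → α,
      x = fun i : Fin n₂ => if hi : (i : ℕ) < n₁ then a ⟨i, hi⟩ else b ⟨(i : ℕ) - n₁, by omega⟩ := by
  refine ⟨fun k => x ⟨n₁ + k, by omega⟩, funext fun i => ?_⟩
  split_ifs with hi
  · exact hx i hi
  · congr 1
    ext
    simp only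
    omega

def prefixCube {n₁ : ℕ} (n₂ : ℕ) (a : Fin n₁ → Bool) : Fin (n₂+2) → Option Bool :=
  fun i => if hi : (i : ℕ) < n₁ then some (a ⟨i, hi⟩)
    else if (i : ℕ) < n₂ then none else some false

theorem mem_vset_prefixCube {n₁ n₂ : ℕ} {a : Fin n₁ → Bool} {x : Fin (n₂+2) → Bool}
    (hle : n₁ ≤ n₂) :
    x ∈ vset (prefixCube n₂ a) ↔
      (∀ (i : Fin (n₂+2)) (hi : (i : ℕ) < n₁), x i = a ⟨i, hi⟩) ∧
        ∀ i : Fin (n₂+2), n₂ ≤ (i : ℕ) → x i = false := by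
  constructor
  · intro hx
    refine ⟨fun i hi => hx i _ (by simp [prefixCube, hi]), fun i hi => hx i _ ?_⟩
    simp [prefixCube, show ¬ (i : ℕ) < n₁ by omega, show ¬ (i : ℕ) < n₂ by omega]
  · rintro ⟨hlt, hge⟩ i b hib
    unfold prefixCube at hib
    split_ifs at hib with h₁ h₂ <;> cases hib
    · exact hlt i h₁
    · exact hge i (by omega)

theorem prefixCube_ssubset_vset_none {n₁ n₂ : ℕ} (hle : n₁ ≤ n₂) (a : Fin n₁ → Bool) :
    vset (prefixCube n₂ a) ⊂ vset (fun _ => none) :=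
  vset_ssubset_vset_none (i := Fin.last (n₂+1)) (b := false) (by
    simp only [prefixCube, Fin.val_last, dif_neg (show ¬ n₂ + 1 < n₁ by omega),
      if_neg (show ¬ n₂ + 1 < n₂ by omega)])

theorem isTrap_prefixCube {n₁ n₂ : ℕ} (hle : n₁ ≤ n₂)
    {f : (Fin (n₂+2) → Bool) → (Fin (n₂+2) → Bool)} {φ : (Fin n₂ → Bool) → Bool}
    {i₁ i₂ : Fin (n₂+2)} (hi₁ : (i₁ : ℕ) = n₂) (hi₂ : (i₂ : ℕ) = n₂ + 1)
    (hfa : ∀ (j : Fin n₂), (j : ℕ) < n₁ → ∀ x,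
      f x (Fin.castAdd 2 j) = ((x (Fin.castAdd 2 j) && ! x i₁) || x i₂))
    (hf₁ : ∀ x, f x i₁ = (φ (fun i : Fin n₂ => x (Fin.castAdd 2 i)) && ! x i₂))
    (hf₂ : ∀ x, f x i₂ = (x i₁ && ! x i₂))
    {a : Fin n₁ → Bool}
    (hφ : ∀ y : Fin n₂ → Bool, (∀ (i : Fin n₂) (hi : (i : ℕ) < n₁), y i = a ⟨i, hi⟩) →
      φ y = false) :
    IsTrap f (prefixCube n₂ a) := by
  intro x hx
  obtain ⟨hxa, hx0⟩ := (mem_vset_prefixCube hle).1 hx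
  have hx₁ : x i₁ = false := hx0 i₁ hi₁.ge
  have hx₂ : x i₂ = false := hx0 i₂ (by omega)
  have hφx : φ (fun i : Fin n₂ => x (Fin.castAdd 2 i)) = false :=
    hφ _ fun i hi => hxa _ hi
  refine (mem_vset_prefixCube hle).2 ⟨fun i hi => ?_, fun i hi => ?_⟩
  · have hfi : f x i = (x i && !x i₁ || x i₂) := hfa ⟨i, by omega⟩ hi x
    simp [hfi, hx₁, hx₂, hxa i hi]
  · obtain rfl | rfl : i = i₁ ∨ i = i₂ := by omega
    · simp [hf₁, hφx]
    · simp [hf₂, hx₁]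

theorem stmt_18 {n₁ n₂ : ℕ} (hle : n₁ ≤ n₂)
    (f : (Fin (n₂+2) → Bool) → (Fin (n₂+2) → Bool))
    (φ : (Fin n₂ → Bool) → Bool)
    (i₁ : Fin (n₂+2)) (i₂ : Fin (n₂+2)) (hi₁ : (i₁ : ℕ) = n₂) (hi₂ : (i₂ : ℕ) = n₂ + 1)
    (hfa : ∀ (j : Fin n₂), (j : ℕ) < n₁ → ∀ x,
      f x (Fin.castAdd 2 j) = ((x (Fin.castAdd 2 j) && ! x i₁) || x i₂))
    (hf₁ : ∀ x, f x i₁ = (φ (fun i : Fin n₂ => x (Fin.castAdd 2 i)) && ! x i₂))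
    (hf₂ : ∀ x, f x i₂ = (x i₁ && ! x i₂))
    (a : Fin n₁ → Bool)
    (hunsat : ∀ b : Fin (n₂ - n₁) → Bool,
      φ (fun i => if hi : (i : ℕ) < n₁ then a ⟨i, hi⟩
                  else b ⟨(i : ℕ) - n₁, by omega⟩) = false) :
    IsTrap f (fun i => if hi : (i : ℕ) < n₁ then some (a ⟨i, hi⟩)
              else if (i : ℕ) < n₂ then none else some false) ∧
    vset (fun i => if hi : (i : ℕ) < n₁ then some (a ⟨i, hi⟩)
              else if (i : ℕ) < n₂ then none else some false)
      ⊂ vset (fun _ : Fin (n₂+2) => (none : Option Bool)) ∧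
    ¬ IsMinTrap f (fun _ => none) := by
  have hφ : ∀ y : Fin n₂ → Bool, (∀ (i : Fin n₂) (hi : (i : ℕ) < n₁), y i = a ⟨i, hi⟩) →
      φ y = false := fun y hy => by
    obtain ⟨b, rfl⟩ := exists_eq_dite_of_forall_lt_eq a y hy
    exact hunsat b
  have htrap := isTrap_prefixCube hle hi₁ hi₂ hfa hf₁ hf₂ hφ
  have hss := prefixCube_ssubset_vset_none hle a
  exact ⟨htrap, hss, not_isMinTrap_of_isTrap_of_ssubset htrap hss⟩
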